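/- Suppose x ∈ Ω_an becomes invertible in Γ_an,con. Then there exists a polynomial y with coefficients in O[1/p] such that x = y·v for some unit v of Ω_an. -/

import Mathlib

open scoped Classical

/-- The analytic setting.  `F = O[1/p]` is the fraction field of a complete discrete
valuation ring `O` which is a finite totally ramified extension of the Witt vectors of an
algebraically closed field `k` of characteristic `p` (encoded via the absolute value `abv`
with `abv p = 1/p`, discreteness, completeness, and algebraically closed residue field),
equipped with a Frobenius lift `σF`.  `Γac = Γ_{an,con}` is the ring of series
`∑_{n ∈ ℤ} cₙ tⁿ` with `cₙ ∈ F` such that `limsup_{n→+∞} |cₙ|^{1/n} ≤ 1` and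
`|cₙ| ≤ p^{cn+d}` for all `n < 0`, for some constants `c, d > 0`; it is encoded by its
coefficient functionals `coeff`, and carries the standard Frobenius `frob = σ_t`
(acting by `σ` on coefficients and sending `t` to `t^p`). -/
structure AnSetting (p : ℕ) [Fact p.Prime] where
  F : Type
  [fieldF : Field F]
  abv : F → ℝ
  abv_nonneg : ∀ x, 0 ≤ abv x
  abv_eq_zero : ∀ x, abv x = 0 ↔ x = 0
  abv_mul : ∀ x y, abv (x * y) = abv x * abv y
  abv_add_le : ∀ x y, abv (x + y) ≤ max (abv x) (abv y)
  abv_p : abv (p : F) = (p : ℝ)⁻¹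
  m : ℕ
  m_pos : 0 < m
  abv_discrete : ∀ x : F, x ≠ 0 → ∃ n : ℤ, abv x = (p : ℝ) ^ ((n : ℝ) / (m : ℝ))
  complete : ∀ f : ℕ → F,
    (∀ ε : ℝ, 0 < ε → ∃ N, ∀ a ≥ N, ∀ b ≥ N, abv (f a - f b) < ε) →
    ∃ x : F, ∀ ε : ℝ, 0 < ε → ∃ N, ∀ a ≥ N, abv (f a - x) < ε
  residue_algClosed : ∀ f : Polynomial F, f.Monic → (∀ i, abv (f.coeff i) ≤ 1) →
    0 < f.natDegree → ∃ x : F, abv x ≤ 1 ∧ abv (Polynomial.eval x f) < 1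
  σF : F ≃+* F
  abv_σF : ∀ x, abv (σF x) = abv x
  σF_frob : ∀ x : F, abv x ≤ 1 → abv (σF x - x ^ p) < 1
  Γac : Type
  [commΓac : CommRing Γac]
  coeff : Γac → ℤ → F
  coeff_injective : Function.Injective coeff
  coeff_add : ∀ x y i, coeff (x + y) i = coeff x i + coeff y i
  coeff_growth : ∀ (x : Γac) (ε : ℝ), 0 < ε → ∃ N : ℤ, 0 ≤ N ∧
    ∀ n : ℤ, N ≤ n → abv (coeff x n) ≤ (1 + ε) ^ n
  coeff_decay : ∀ x : Γac, ∃ c d : ℝ, 0 < c ∧ 0 < d ∧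
    ∀ n : ℤ, n < 0 → abv (coeff x n) ≤ (p : ℝ) ^ (c * (n : ℝ) + d)
  coeff_surjective : ∀ f : ℤ → F,
    (∀ ε : ℝ, 0 < ε → ∃ N : ℤ, 0 ≤ N ∧ ∀ n : ℤ, N ≤ n → abv (f n) ≤ (1 + ε) ^ n) →
    (∃ c d : ℝ, 0 < c ∧ 0 < d ∧ ∀ n : ℤ, n < 0 → abv (f n) ≤ (p : ℝ) ^ (c * (n : ℝ) + d)) →
    ∃ x, coeff x = f
  coeff_one : ∀ i, coeff 1 i = if i = 0 then 1 else 0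
  t : Γac
  coeff_t : ∀ i, coeff t i = if i = 1 then 1 else 0
  const : F →+* Γac
  coeff_const : ∀ a i, coeff (const a) i = if i = 0 then a else 0
  coeff_mul : ∀ (x y : Γac) (n : ℤ) (ε : ℝ), 0 < ε →
    ∃ S : Finset ℤ, ∀ T : Finset ℤ, S ⊆ T →
      abv (coeff (x * y) n - ∑ i ∈ T, coeff x i * coeff y (n - i)) < ε
  frob : Γac →+* Γac
  coeff_frob : ∀ x n, coeff (frob x) n =
    if (p : ℤ) ∣ n then σF (coeff x (n / (p : ℤ))) else 0

attribute [instance] AnSetting.fieldF AnSetting.commΓac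

namespace AnSetting

variable {p : ℕ} [Fact p.Prime] (S : AnSetting p)

/-- The subring `Ω_an ⊆ Γ_{an,con}` of rigid analytic functions on the open unit disc
(series with no negative-index coefficients), as a set. -/
def omegaAnSet : Set S.Γac := {x | ∀ i : ℤ, i < 0 → S.coeff x i = 0}

/-- The subring `Γ_con[1/p] ⊆ Γ_{an,con}`: the elements whose coefficients are bounded
above, as a set. -/
def conPSet : Set S.Γac := {x | ∃ C : ℝ, ∀ i : ℤ, S.abv (S.coeff x i) ≤ C}

/-- The subring `Γ_con ⊆ Γ_{an,con}`: the elements with integral coefficients, as a set. -/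
def conSet : Set S.Γac := {x | ∀ i : ℤ, S.abv (S.coeff x i) ≤ 1}

/-- The subring `Ω = O[[t]] ⊆ Γ_{an,con}`, as a set. -/
def omegaSet : Set S.Γac := {x | (∀ i : ℤ, S.abv (S.coeff x i) ≤ 1) ∧ ∀ i : ℤ, i < 0 → S.coeff x i = 0}

end AnSetting

/-!
Let `w` be the inverse of `x` in `Γ_an,con`. For `ρ < 1` close to `1` the terms `|x_n| ρ^n` and
`|w_n| ρ^n` tend to `0` as `|n| → ∞`, so each has a least maximal index, and in the coefficient of
`x w = 1` at the sum of these two indices a single term dominates: the sum is `0`. Maximal indices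
do not decrease with `ρ`, so comparing two radii shows that one index `D` is maximal for `x` on a
whole annulus `r < ρ < 1`, and there `x = x_D (t^D + g)` with `|g|_ρ ≤ Θ ρ^D`, `Θ < 1`. The
Neumann series solving `q = 1 - (g q)_{≥ D} / t^D` then converges, with `|q|_ρ ≤ 1 = |q(0)|`, so `q`
is a unit of `Ω_an`, and `(t^D + g) q` is a polynomial of degree at most `D`. Finally
`x = (x q) · q⁻¹`.
-/

open Filter Set PowerSeries Topology
open scoped PowerSeries.WithPiTopology

lemma pow_mul_pow_le_div_mul {s t : ℝ} (hs : 0 ≤ s) (hst : s ≤ t) {i j : ℕ} (hij : i < j) :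
    s ^ j * t ^ i ≤ s / t * (s ^ i * t ^ j) := by
  obtain ⟨k, rfl⟩ := Nat.exists_eq_add_of_lt hij
  rcases hs.eq_or_lt with rfl | hs
  · simp
  have ht : 0 < t := hs.trans_le hst
  have hk : s ^ k ≤ t ^ k := pow_le_pow_left₀ hs.le hst k
  calc s ^ (i + k + 1) * t ^ i = s * s ^ i * t ^ i * s ^ k := by ring
    _ ≤ s * s ^ i * t ^ i * t ^ k := by gcongr
    _ = s / t * (s ^ i * t ^ (i + k + 1)) := by field_simp; ring

lemma exists_least_argmax_of_tendsto_cofinite {a : ℤ → ℝ} (ha : Tendsto a cofinite (𝓝 0))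
    {i₀ : ℤ} (hi₀ : 0 < a i₀) : ∃ e, 0 < a e ∧ (∀ i, a i ≤ a e) ∧ ∀ i < e, a i < a e := by
  have hfin : {i | a i₀ ≤ a i}.Finite := by
    simpa using Filter.eventually_cofinite.1 (ha.eventually (gt_mem_nhds hi₀))
  obtain ⟨m, hm, hmax⟩ := Set.exists_max_image _ a hfin ⟨i₀, le_refl (a i₀)⟩
  have hglob : ∀ i, a i ≤ a m := fun i =>
    (le_total (a i₀) (a i)).elim (hmax i) fun hi => hi.trans hm
  have hA : {i | a i = a m}.Finite := hfin.subset fun i hi => hm.trans hi.ge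
  obtain ⟨e, he, hemin⟩ := Set.exists_min_image _ id hA ⟨m, rfl⟩
  simp only [mem_ofPred_eq, id] at he hemin
  refine ⟨e, he ▸ hi₀.trans_le hm, fun i => he ▸ hglob i, fun i hi => ?_⟩
  exact he ▸ (hglob i).lt_of_ne fun h => (hemin i h).not_gt hi

namespace IsUltrametricDist

variable {M ι : Type*} [SeminormedAddCommGroup M] [IsUltrametricDist M] {s : Finset ι}
  {f : ι → M}

lemma norm_sum_mul_le_of_forall_le {P C : ℝ} (hP : 0 < P) (hC : 0 ≤ C)
    (h : ∀ i ∈ s, ‖f i‖ * P ≤ C) : ‖∑ i ∈ s, f i‖ * P ≤ C := by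
  rw [← le_div_iff₀ hP]
  exact norm_sum_le_of_forall_le_of_nonneg (div_nonneg hC hP.le)
    fun i hi => (le_div_iff₀ hP).2 (h i hi)

lemma norm_sum_eq_of_forall_norm_lt {i₀ : ι} (hi₀ : i₀ ∈ s)
    (h : ∀ i ∈ s, i ≠ i₀ → ‖f i‖ < ‖f i₀‖) : ‖∑ i ∈ s, f i‖ = ‖f i₀‖ := by
  classical
  rw [← Finset.add_sum_erase s f hi₀]
  rcases (s.erase i₀).eq_empty_or_nonempty with he | hne
  · rw [he, Finset.sum_empty, add_zero]
  obtain ⟨j, hj, hle⟩ := exists_norm_finsetSum_le_of_nonempty hne f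
  have hlt := hle.trans_lt (h j (Finset.mem_of_mem_erase hj) (Finset.ne_of_mem_erase hj))
  rw [norm_add_eq_max_of_norm_ne_norm hlt.ne', max_eq_left hlt.le]

end IsUltrametricDist

namespace PowerSeries

section WeierstrassOp

variable {R : Type*} [Ring R] {g ψ : R⟦X⟧} {D : ℕ}

noncomputable def divXPow (D : ℕ) : R⟦X⟧ →+ R⟦X⟧ where
  toFun φ := mk fun n => coeff (n + D) φ
  map_zero' := by ext; simp
  map_add' _ _ := by ext; simp

@[simp]
lemma coeff_divXPow (D n : ℕ) (φ : R⟦X⟧) : coeff n (divXPow D φ) = coeff (n + D) φ :=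
  coeff_mk n fun n => coeff (n + D) φ

lemma continuous_divXPow [TopologicalSpace R] (D : ℕ) : Continuous (divXPow (R := R) D) := by
  refine continuous_iff_continuousAt.2 fun φ => ?_
  rw [ContinuousAt, WithPiTopology.tendsto_iff_coeff_tendsto]
  intro n
  simp only [coeff_divXPow]
  exact (WithPiTopology.continuous_coeff R _).continuousAt

noncomputable def weierstrassOp (g : R⟦X⟧) (D : ℕ) : R⟦X⟧ →+ R⟦X⟧ :=
  -(divXPow D).comp (AddMonoidHom.mulLeft g)

lemma weierstrassOp_apply : weierstrassOp g D ψ = -divXPow D (g * ψ) := rfl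

/-- The Neumann series solving `q = 1 + weierstrassOp g D q`; as a `tsum` it is junk unless it
converges, see `summable_iterate_weierstrassOp`. -/
noncomputable def weierstrassMultiplier [TopologicalSpace R] (g : R⟦X⟧) (D : ℕ) : R⟦X⟧ :=
  ∑' k, (weierstrassOp g D)^[k] 1

end WeierstrassOp

section GaussNorm

variable {K : Type*} [NormedField K] {ρ A B : ℝ} {φ ψ : K⟦X⟧}

def GaussNormLE (ρ : ℝ) (φ : K⟦X⟧) (A : ℝ) : Prop :=
  ∀ n, ‖coeff n φ‖ * ρ ^ n ≤ A

lemma GaussNormLE.nonneg (h : GaussNormLE ρ φ A) : 0 ≤ A := by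
  simpa using (norm_nonneg (coeff 0 φ)).trans (by simpa using h 0)

lemma gaussNormLE_one (ρ : ℝ) : GaussNormLE ρ (1 : K⟦X⟧) 1 := by
  rintro (_ | n) <;> simp [coeff_one]

lemma norm_mul_mul_pow_add_le {a b : K} {i j : ℕ} (hρ : 0 ≤ ρ) (ha : ‖a‖ * ρ ^ i ≤ A)
    (hb : ‖b‖ * ρ ^ j ≤ B) : ‖a * b‖ * ρ ^ (i + j) ≤ A * B := by
  rw [norm_mul, pow_add, mul_mul_mul_comm]
  exact mul_le_mul ha hb (by positivity) ((by positivity : 0 ≤ ‖a‖ * ρ ^ i).trans ha)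

lemma GaussNormLE.divXPow (hρ : 0 < ρ) (h : GaussNormLE ρ φ A) (D : ℕ) :
    GaussNormLE ρ (divXPow D φ) (A / ρ ^ D) := by
  intro n
  rw [coeff_divXPow, le_div_iff₀ (pow_pos hρ D), mul_assoc, ← pow_add]
  exact h (n + D)

variable [IsUltrametricDist K]

lemma GaussNormLE.mul (hρ : 0 < ρ) (hφ : GaussNormLE ρ φ A) (hψ : GaussNormLE ρ ψ B) :
    GaussNormLE ρ (φ * ψ) (A * B) := by
  intro n
  rw [coeff_mul]
  refine IsUltrametricDist.norm_sum_mul_le_of_forall_le (pow_pos hρ n)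
    (mul_nonneg hφ.nonneg hψ.nonneg) fun ij hij => ?_
  rw [← Finset.HasAntidiagonal.mem_antidiagonal.1 hij]
  exact norm_mul_mul_pow_add_le hρ.le (hφ _) (hψ _)

lemma GaussNormLE.inv (hρ : 0 < ρ) (h0 : ‖constantCoeff φ‖ = 1) (h : GaussNormLE ρ φ 1) :
    GaussNormLE ρ φ⁻¹ 1 := by
  intro n
  induction n using Nat.strong_induction_on with
  | _ n ih =>
  rw [coeff_inv]
  split_ifs with hn
  · simp [hn, h0]
  rw [norm_mul, norm_neg, norm_inv, h0, inv_one, one_mul]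
  refine IsUltrametricDist.norm_sum_mul_le_of_forall_le (pow_pos hρ n) zero_le_one
    fun ij hij => ?_
  split_ifs with hlt
  · rw [← Finset.HasAntidiagonal.mem_antidiagonal.1 hij, ← one_mul 1]
    exact norm_mul_mul_pow_add_le hρ.le (h _) (ih _ hlt)
  · simp

end GaussNorm

section Weierstrass

variable {K : Type*} [NormedField K] [IsUltrametricDist K] {ρ Θ A : ℝ} {g ψ : K⟦X⟧} {D : ℕ}

lemma GaussNormLE.weierstrassOp (hψ : GaussNormLE ρ ψ A) (hρ : 0 < ρ)
    (hg : GaussNormLE ρ g (Θ * ρ ^ D)) : GaussNormLE ρ (weierstrassOp g D ψ) (Θ * A) := by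
  intro n
  have := (hg.mul hρ hψ).divXPow hρ D n
  rwa [mul_right_comm, mul_div_cancel_right₀ _ (pow_pos hρ D).ne', ← norm_neg, ← map_neg,
    ← weierstrassOp_apply] at this

lemma gaussNormLE_iterate_weierstrassOp (hρ : 0 < ρ) (hg : GaussNormLE ρ g (Θ * ρ ^ D))
    (k : ℕ) : GaussNormLE ρ ((weierstrassOp g D)^[k] 1) (Θ ^ k) := by
  induction k with
  | zero => exact gaussNormLE_one ρ
  | succ k ih =>
    rw [Function.iterate_succ_apply', pow_succ']
    exact ih.weierstrassOp hρ hg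

variable [CompleteSpace K]

lemma summable_iterate_weierstrassOp (hρ : 0 < ρ) (hg : GaussNormLE ρ g (Θ * ρ ^ D))
    (hΘ : Θ < 1) : Summable fun k => (weierstrassOp g D)^[k] 1 := by
  have hΘ0 : 0 ≤ Θ := (mul_nonneg_iff_of_pos_right (pow_pos hρ D)).1 hg.nonneg
  rw [WithPiTopology.summable_iff_summable_coeff]
  intro n
  refine .of_norm_bounded ((summable_geometric_of_lt_one hΘ0 hΘ).div_const (ρ ^ n)) fun k => ?_
  rw [le_div_iff₀ (pow_pos hρ n)]
  exact gaussNormLE_iterate_weierstrassOp hρ hg k n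

lemma weierstrassMultiplier_eq (hρ : 0 < ρ) (hg : GaussNormLE ρ g (Θ * ρ ^ D)) (hΘ : Θ < 1) :
    weierstrassMultiplier g D = 1 + weierstrassOp g D (weierstrassMultiplier g D) := by
  have hs := summable_iterate_weierstrassOp hρ hg hΘ
  rw [weierstrassMultiplier, hs.map_tsum _ ((continuous_divXPow D).comp
    (continuous_const_mul g)).neg, hs.tsum_eq_zero_add]
  simp only [Function.iterate_zero_apply, Function.iterate_succ_apply']

lemma gaussNormLE_weierstrassMultiplier (hρ : 0 < ρ) (hg : GaussNormLE ρ g (Θ * ρ ^ D))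
    (hΘ : Θ < 1) : GaussNormLE ρ (weierstrassMultiplier g D) 1 := by
  intro n
  have hs := (WithPiTopology.hasSum_iff_hasSum_coeff K).1
    (summable_iterate_weierstrassOp hρ hg hΘ).hasSum n
  rw [weierstrassMultiplier, ← hs.tsum_eq, ← le_div_iff₀ (pow_pos hρ n)]
  refine IsUltrametricDist.norm_tsum_le_of_forall_le_of_nonneg (by positivity) fun k => ?_
  rw [le_div_iff₀ (pow_pos hρ n)]
  exact (gaussNormLE_iterate_weierstrassOp hρ hg k n).trans
    (pow_le_one₀ ((mul_nonneg_iff_of_pos_right (pow_pos hρ D)).1 hg.nonneg) hΘ.le)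

lemma norm_constantCoeff_weierstrassMultiplier (hρ : 0 < ρ)
    (hg : GaussNormLE ρ g (Θ * ρ ^ D)) (hΘ : Θ < 1) :
    ‖constantCoeff (weierstrassMultiplier g D)‖ = 1 := by
  have hop := (gaussNormLE_weierstrassMultiplier hρ hg hΘ).weierstrassOp hρ hg 0
  rw [pow_zero, mul_one, mul_one, coeff_zero_eq_constantCoeff_apply] at hop
  rw [weierstrassMultiplier_eq hρ hg hΘ, map_add, map_one, add_comm,
    IsUltrametricDist.norm_add_eq_max_of_norm_ne_norm, norm_one, max_eq_right (hop.trans hΘ.le)]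
  rw [norm_one]
  exact (hop.trans_lt hΘ).ne

lemma coeff_X_pow_add_mul_weierstrassMultiplier (hρ : 0 < ρ)
    (hg : GaussNormLE ρ g (Θ * ρ ^ D)) (hΘ : Θ < 1) {n : ℕ} (hn : D < n) :
    coeff n ((X ^ D + g) * weierstrassMultiplier g D) = 0 := by
  rw [add_mul, map_add, coeff_X_pow_mul', if_pos hn.le]
  nth_rewrite 1 [weierstrassMultiplier_eq hρ hg hΘ]
  rw [map_add, coeff_one, if_neg (by omega), zero_add, weierstrassOp_apply, map_neg,
    coeff_divXPow, Nat.sub_add_cancel hn.le, neg_add_cancel]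

end Weierstrass

section Dominant

variable {K : Type*} [NormedField K] {φ : K⟦X⟧} {D : ℕ} {r ρ : ℝ}

lemma exists_gaussNormLE_sub_X_pow (hr : 0 ≤ r)
    (hdom : ∀ ρ ∈ Ioo r 1, GaussNormLE ρ φ (‖coeff D φ‖ * ρ ^ D)) (hD : coeff D φ ≠ 0)
    (hρ : ρ ∈ Ioo r 1) : ∃ Θ < 1, GaussNormLE ρ (C (coeff D φ)⁻¹ * φ - X ^ D) (Θ * ρ ^ D) := by
  obtain ⟨hrρ, hρ1⟩ := hρ
  have hρ0 : 0 < ρ := hr.trans_lt hrρ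
  obtain ⟨s, hrs, hsρ⟩ := exists_between hrρ
  obtain ⟨t, hρt, ht1⟩ := exists_between hρ1
  have hs0 : 0 < s := hr.trans_lt hrs
  have ht0 : 0 < t := hρ0.trans hρt
  have hc : 0 < ‖coeff D φ‖ := norm_pos_iff.2 hD
  set Θ := max (s / ρ) (ρ / t)
  -- Dominance of the `D`-th term at the radius `s < ρ` (resp. `t > ρ`) gains the factor `s / ρ`
  -- (resp. `ρ / t`) at `ρ` for every lower (resp. higher) index.
  have key : ∀ {a u v ρn ρD θ : ℝ}, 0 < u → 0 ≤ ρn → θ ≤ Θ → 0 ≤ ρD →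
      a * u ≤ ‖coeff D φ‖ * v → v * ρn ≤ θ * (u * ρD) → a * ρn ≤ ‖coeff D φ‖ * (Θ * ρD) := by
    intro a u v ρn ρD θ hu hρn hθ hρD h1 h2
    refine le_of_mul_le_mul_right ?_ hu
    calc a * ρn * u = a * u * ρn := by ring
      _ ≤ ‖coeff D φ‖ * v * ρn := by gcongr
      _ = ‖coeff D φ‖ * (v * ρn) := by ring
      _ ≤ ‖coeff D φ‖ * (Θ * (u * ρD)) := mul_le_mul_of_nonneg_left (h2.trans (by gcongr)) hc.le
      _ = ‖coeff D φ‖ * (Θ * ρD) * u := by ring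
  refine ⟨Θ, max_lt ((div_lt_one hρ0).2 hsρ) ((div_lt_one ht0).2 hρt), fun n => ?_⟩
  rw [map_sub, coeff_C_mul, coeff_X_pow]
  rcases lt_trichotomy n D with h | rfl | h
  · rw [if_neg h.ne, sub_zero, norm_mul, norm_inv, mul_assoc, inv_mul_le_iff₀ hc]
    exact key (pow_pos hs0 n) (by positivity) (le_max_left _ _) (by positivity)
      (hdom s ⟨hrs, hsρ.trans hρ1⟩ n) (pow_mul_pow_le_div_mul hs0.le hsρ.le h)
  · rw [if_pos rfl, inv_mul_cancel₀ hD, sub_self, norm_zero, zero_mul]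
    exact mul_nonneg ((div_pos hs0 hρ0).le.trans (le_max_left _ _)) (by positivity)
  · rw [if_neg h.ne', sub_zero, norm_mul, norm_inv, mul_assoc, inv_mul_le_iff₀ hc]
    refine key (pow_pos ht0 n) (by positivity) (le_max_right _ _) (by positivity)
      (hdom t ⟨hrρ.trans hρt, ht1⟩ n) ?_
    rw [mul_comm _ (ρ ^ n), mul_comm (t ^ n)]
    exact pow_mul_pow_le_div_mul hρ0.le hρt.le h

theorem exists_mul_eq_polynomial_of_dominant [IsUltrametricDist K] [CompleteSpace K]
    (hr : 0 ≤ r) (hr1 : r < 1) (hdom : ∀ ρ ∈ Ioo r 1, GaussNormLE ρ φ (‖coeff D φ‖ * ρ ^ D))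
    (hD : coeff D φ ≠ 0) :
    ∃ q : K⟦X⟧, constantCoeff q ≠ 0 ∧ (∀ ρ ∈ Ioo r 1, GaussNormLE ρ q 1 ∧ GaussNormLE ρ q⁻¹ 1) ∧
      ∀ n, D < n → coeff n (φ * q) = 0 := by
  set g := C (coeff D φ)⁻¹ * φ - X ^ D
  have hpos : ∀ ρ ∈ Ioo r 1, 0 < ρ := fun ρ hρ => hr.trans_lt hρ.1
  have hmid : (r + 1) / 2 ∈ Ioo r 1 := ⟨by linarith, by linarith⟩
  obtain ⟨Θ, hΘ, hg⟩ := exists_gaussNormLE_sub_X_pow hr hdom hD hmid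
  have hq0 := norm_constantCoeff_weierstrassMultiplier (hpos _ hmid) hg hΘ
  refine ⟨weierstrassMultiplier g D, norm_ne_zero_iff.1 (hq0 ▸ one_ne_zero),
    fun ρ hρ => ?_, fun n hn => ?_⟩
  · obtain ⟨Θ', hΘ', hg'⟩ := exists_gaussNormLE_sub_X_pow hr hdom hD hρ
    have hq := gaussNormLE_weierstrassMultiplier (hpos ρ hρ) hg' hΘ'
    exact ⟨hq, hq.inv (hpos ρ hρ) hq0⟩
  · have hφ : φ = C (coeff D φ) * (X ^ D + g) := by
      rw [add_sub_cancel, ← mul_assoc, ← map_mul, mul_inv_cancel₀ hD, map_one, one_mul]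
    rw [hφ, mul_assoc, coeff_C_mul,
      coeff_X_pow_add_mul_weierstrassMultiplier (hpos _ hmid) hg hΘ hn, mul_zero]

end Dominant

end PowerSeries

namespace AnSetting

variable {p : ℕ} [Fact p.Prime]

section NormedField

variable (S : AnSetting p)

def absoluteValue : AbsoluteValue S.F ℝ where
  toFun := S.abv
  map_mul' := S.abv_mul
  nonneg' := S.abv_nonneg
  eq_zero' := S.abv_eq_zero
  add_le' x y := (S.abv_add_le x y).trans (max_le_add_of_nonneg (S.abv_nonneg x) (S.abv_nonneg y))

noncomputable instance : NormedField S.F := S.absoluteValue.toNormedField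

lemma norm_eq_abv (a : S.F) : ‖a‖ = S.abv a := rfl

instance : IsUltrametricDist S.F :=
  IsUltrametricDist.isUltrametricDist_of_forall_norm_add_le_max_norm S.abv_add_le

instance : CompleteSpace S.F := by
  refine Metric.complete_of_cauchySeq_tendsto fun u hu => ?_
  obtain ⟨a, ha⟩ := S.complete u fun ε hε => by
    simpa only [dist_eq_norm, norm_eq_abv] using Metric.cauchySeq_iff.1 hu ε hε
  exact ⟨a, Metric.tendsto_atTop.2 fun ε hε => by
    simpa only [dist_eq_norm, norm_eq_abv] using ha ε hε⟩

end NormedField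

variable {S : AnSetting p} {x y w : S.Γac} {ρ : ℝ}

lemma coeff_zero (i : ℤ) : S.coeff 0 i = 0 := by
  simpa using S.coeff_add 0 0 i

lemma exists_coeff_ne_zero_of_mul_eq_one (h : x * w = 1) : ∃ i, S.coeff x i ≠ 0 := by
  by_contra! hx
  have : x = 0 := S.coeff_injective (funext fun i => (hx i).trans (coeff_zero i).symm)
  simpa [this, S.coeff_one, coeff_zero] using congr_arg (S.coeff · 0) h

lemma coeff_mul_eq_sum {n : ℤ} (s : Finset ℤ)
    (hs : ∀ i ∉ s, S.coeff x i * S.coeff y (n - i) = 0) :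
    S.coeff (x * y) n = ∑ i ∈ s, S.coeff x i * S.coeff y (n - i) := by
  classical
  refine eq_of_forall_dist_le fun ε hε => ?_
  obtain ⟨T, hT⟩ := S.coeff_mul x y n ε hε
  rw [dist_eq_norm, Finset.sum_subset Finset.subset_union_right fun i _ hi => hs i hi]
  exact (hT (T ∪ s) Finset.subset_union_left).le

lemma norm_coeff_mul_eq_of_forall_lt {n i₀ : ℤ}
    (h : ∀ i ≠ i₀, ‖S.coeff x i * S.coeff y (n - i)‖ < ‖S.coeff x i₀ * S.coeff y (n - i₀)‖) :
    ‖S.coeff (x * y) n‖ = ‖S.coeff x i₀ * S.coeff y (n - i₀)‖ := by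
  have hpos := (norm_nonneg _).trans_lt (h (i₀ + 1) (by omega))
  obtain ⟨T, hT⟩ := S.coeff_mul x y n _ hpos
  have happrox := hT (insert i₀ T) (Finset.subset_insert _ _)
  have hsum := IsUltrametricDist.norm_sum_eq_of_forall_norm_lt (Finset.mem_insert_self i₀ T)
    fun i _ hi => h i hi
  rw [← norm_eq_abv, ← hsum] at happrox
  rw [← sub_add_cancel (S.coeff (x * y) n), IsUltrametricDist.norm_add_eq_max_of_norm_ne_norm
    happrox.ne, max_eq_right happrox.le, hsum]

section GaussTerm

variable (S) in
noncomputable def gaussTerm (x : S.Γac) (ρ : ℝ) (n : ℤ) : ℝ := ‖S.coeff x n‖ * ρ ^ n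

lemma gaussTerm_nonneg (x : S.Γac) (hρ : 0 < ρ) (n : ℤ) : 0 ≤ S.gaussTerm x ρ n := by
  unfold gaussTerm; positivity

lemma gaussTerm_pos (hρ : 0 < ρ) {n : ℤ} (hn : S.coeff x n ≠ 0) : 0 < S.gaussTerm x ρ n :=
  mul_pos (norm_pos_iff.2 hn) (zpow_pos hρ n)

lemma coeff_ne_zero_of_gaussTerm_pos {n : ℤ} (h : 0 < S.gaussTerm x ρ n) : S.coeff x n ≠ 0 :=
  fun h0 => by simp [gaussTerm, h0] at h

lemma gaussTerm_mul_gaussTerm (y : S.Γac) (hρ : 0 < ρ) (i j : ℤ) :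
    S.gaussTerm x ρ i * S.gaussTerm y ρ j = ‖S.coeff x i * S.coeff y j‖ * ρ ^ (i + j) := by
  unfold gaussTerm
  rw [norm_mul, zpow_add₀ hρ.ne']
  ring

lemma eventually_gaussTerm_lt_atTop (x : S.Γac) {c : ℝ} (hρ0 : 0 < ρ) (hρ1 : ρ < 1)
    (hc : 0 < c) : ∀ᶠ n in atTop, S.gaussTerm x ρ n < c := by
  obtain ⟨N, -, hN⟩ := S.coeff_growth x ((1 - ρ) / (2 * ρ)) (by have := sub_pos.2 hρ1; positivity)
  have hr : (1 + (1 - ρ) / (2 * ρ)) * ρ = (1 + ρ) / 2 := by field_simp; ring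
  obtain ⟨k, hk⟩ := exists_pow_lt_of_lt_one hc (show (1 + ρ) / 2 < 1 by linarith)
  filter_upwards [eventually_ge_atTop N, eventually_ge_atTop (k : ℤ)] with n hnN hnk
  calc S.gaussTerm x ρ n ≤ (1 + (1 - ρ) / (2 * ρ)) ^ n * ρ ^ n := by
        unfold gaussTerm; gcongr; exact hN n hnN
    _ = ((1 + ρ) / 2) ^ n := by rw [← mul_zpow, hr]
    _ ≤ ((1 + ρ) / 2) ^ (k : ℤ) :=
        zpow_le_zpow_right_of_le_one₀ (by positivity) (by linarith) hnk
    _ < c := by rwa [zpow_natCast]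

lemma exists_eventually_gaussTerm_lt_atBot (x : S.Γac) :
    ∃ β, 0 < β ∧ β < 1 ∧ ∀ ρ, β < ρ → ∀ c > 0, ∀ᶠ n in atBot, S.gaussTerm x ρ n < c := by
  obtain ⟨a, d, ha, hd, hdecay⟩ := S.coeff_decay x
  have hp : (1 : ℝ) < p := by exact_mod_cast (Fact.out : p.Prime).one_lt
  have hp0 : (0 : ℝ) < p := one_pos.trans hp
  refine ⟨(p : ℝ) ^ (-a), Real.rpow_pos_of_pos hp0 _,
    Real.rpow_lt_one_of_one_lt_of_neg hp (neg_lt_zero.2 ha), fun ρ hρ c hc => ?_⟩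
  have hρ0 : 0 < ρ := (Real.rpow_pos_of_pos hp0 _).trans hρ
  have hpa : 0 < (p : ℝ) ^ a := Real.rpow_pos_of_pos hp0 a
  have hpd : 0 < (p : ℝ) ^ d := Real.rpow_pos_of_pos hp0 d
  set R := (p : ℝ) ^ a * ρ
  have hR : 1 < R := by
    rw [Real.rpow_neg hp0.le] at hρ
    simpa [R, mul_comm] using (inv_lt_iff_one_lt_mul₀' hpa).1 hρ
  obtain ⟨k, hk⟩ := exists_pow_lt_of_lt_one (div_pos hc hpd) (inv_lt_one_of_one_lt₀ hR)
  filter_upwards [eventually_le_atBot (min (-1) (-k : ℤ))] with n hn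
  calc S.gaussTerm x ρ n ≤ (p : ℝ) ^ (a * n + d) * ρ ^ n := by
        unfold gaussTerm; gcongr; exact hdecay n (by omega)
    _ = (p : ℝ) ^ d * R ^ n := by
        rw [Real.rpow_add hp0, Real.rpow_mul hp0.le, Real.rpow_intCast, mul_zpow]; ring
    _ ≤ (p : ℝ) ^ d * R ^ (-k : ℤ) := by gcongr; exacts [hR.le, by omega]
    _ < c := by
        rw [zpow_neg, zpow_natCast, ← inv_pow, ← lt_div_iff₀' hpd]; exact hk

lemma tendsto_gaussTerm_cofinite (hρ0 : 0 < ρ) (hρ1 : ρ < 1)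
    (hbot : ∀ c > 0, ∀ᶠ n in atBot, S.gaussTerm x ρ n < c) :
    Tendsto (S.gaussTerm x ρ) cofinite (𝓝 0) := by
  rw [Int.cofinite_eq]
  exact tendsto_order.2 ⟨fun b hb => .of_forall fun n => hb.trans_le (gaussTerm_nonneg x hρ0 n),
    fun c hc => eventually_sup.2 ⟨hbot c hc, eventually_gaussTerm_lt_atTop x hρ0 hρ1 hc⟩⟩

end GaussTerm

section NewtonPolygon

lemma add_eq_zero_of_least_maximal_indices (hxw : x * w = 1) (hρ : 0 < ρ) {e e' : ℤ}
    (hx : ∀ i, S.gaussTerm x ρ i ≤ S.gaussTerm x ρ e)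
    (hx' : ∀ i < e, S.gaussTerm x ρ i < S.gaussTerm x ρ e)
    (hw : ∀ j, S.gaussTerm w ρ j ≤ S.gaussTerm w ρ e')
    (hw' : ∀ j < e', S.gaussTerm w ρ j < S.gaussTerm w ρ e')
    (hpx : 0 < S.gaussTerm x ρ e) (hpw : 0 < S.gaussTerm w ρ e') : e + e' = 0 := by
  have hlt : ∀ i ≠ e, ‖S.coeff x i * S.coeff w (e + e' - i)‖ < ‖S.coeff x e * S.coeff w e'‖ := by
    intro i hi
    have hprod : S.gaussTerm x ρ i * S.gaussTerm w ρ (e + e' - i) <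
        S.gaussTerm x ρ e * S.gaussTerm w ρ e' := by
      rcases hi.lt_or_gt with h | h
      · rw [mul_comm, mul_comm (S.gaussTerm x ρ e)]
        exact mul_lt_mul' (hw _) (hx' i h) (gaussTerm_nonneg x hρ i) hpw
      · exact mul_lt_mul' (hx i) (hw' _ (by omega)) (gaussTerm_nonneg w hρ _) hpx
    rw [gaussTerm_mul_gaussTerm w hρ, gaussTerm_mul_gaussTerm w hρ, add_sub_cancel] at hprod
    exact lt_of_mul_lt_mul_right hprod (zpow_pos hρ _).le
  have hne := norm_coeff_mul_eq_of_forall_lt (n := e + e') (by rwa [add_sub_cancel_left])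
  rw [hxw, S.coeff_one] at hne
  by_contra h0
  rw [if_neg h0, norm_zero, add_sub_cancel_left] at hne
  exact (hlt (e + 1) (by omega)).not_ge (hne ▸ norm_nonneg _)

lemma exists_maximal_indices_add_eq_zero (hxw : x * w = 1) (hρ : 0 < ρ)
    (htx : Tendsto (S.gaussTerm x ρ) cofinite (𝓝 0))
    (htw : Tendsto (S.gaussTerm w ρ) cofinite (𝓝 0)) {i₀ j₀ : ℤ} (hi₀ : S.coeff x i₀ ≠ 0)
    (hj₀ : S.coeff w j₀ ≠ 0) :
    ∃ e e', e + e' = 0 ∧ (∀ i, S.gaussTerm x ρ i ≤ S.gaussTerm x ρ e) ∧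
      (∀ j, S.gaussTerm w ρ j ≤ S.gaussTerm w ρ e') ∧ S.coeff x e ≠ 0 ∧ S.coeff w e' ≠ 0 := by
  obtain ⟨e, hpx, hx, hx'⟩ := exists_least_argmax_of_tendsto_cofinite htx (gaussTerm_pos hρ hi₀)
  obtain ⟨e', hpw, hw, hw'⟩ := exists_least_argmax_of_tendsto_cofinite htw (gaussTerm_pos hρ hj₀)
  exact ⟨e, e', add_eq_zero_of_least_maximal_indices hxw hρ hx hx' hw hw' hpx hpw, hx, hw,
    coeff_ne_zero_of_gaussTerm_pos hpx, coeff_ne_zero_of_gaussTerm_pos hpw⟩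

lemma le_of_forall_gaussTerm_le {ρ' : ℝ} (hρ : 0 < ρ) (hρρ' : ρ < ρ') {i j : ℤ}
    (hi : ∀ k, S.gaussTerm x ρ k ≤ S.gaussTerm x ρ i)
    (hj : ∀ k, S.gaussTerm x ρ' k ≤ S.gaussTerm x ρ' j) (h0 : S.coeff x i ≠ 0) : i ≤ j := by
  by_contra! hji
  have hscale : ∀ k, S.gaussTerm x ρ' k = S.gaussTerm x ρ k * (ρ' / ρ) ^ k := fun k => by
    unfold gaussTerm
    rw [div_zpow, mul_assoc, mul_div_cancel₀ _ (zpow_pos hρ k).ne']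
  have h1 : S.gaussTerm x ρ i * (ρ' / ρ) ^ j < S.gaussTerm x ρ i * (ρ' / ρ) ^ i :=
    mul_lt_mul_of_pos_left (zpow_lt_zpow_right₀ ((one_lt_div hρ).2 hρρ') hji)
      (gaussTerm_pos hρ h0)
  have h2 : S.gaussTerm x ρ j * (ρ' / ρ) ^ j ≤ S.gaussTerm x ρ i * (ρ' / ρ) ^ j :=
    mul_le_mul_of_nonneg_right (hi j) (zpow_pos (div_pos (hρ.trans hρρ') hρ) j).le
  have h3 := hj i
  rw [hscale, hscale] at h3
  linarith

theorem exists_dominant_index (hxΩ : x ∈ S.omegaAnSet) (hxw : x * w = 1) :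
    ∃ (D : ℕ) (r : ℝ), 0 ≤ r ∧ r < 1 ∧ S.coeff x D ≠ 0 ∧
      ∀ ρ ∈ Ioo r 1, ∀ n, S.gaussTerm x ρ n ≤ S.gaussTerm x ρ D := by
  obtain ⟨β, hβ0, hβ1, hβ⟩ := exists_eventually_gaussTerm_lt_atBot w
  obtain ⟨i₀, hi₀⟩ := exists_coeff_ne_zero_of_mul_eq_one hxw
  obtain ⟨j₀, hj₀⟩ := exists_coeff_ne_zero_of_mul_eq_one ((mul_comm w x).trans hxw)
  have hpos : ∀ ρ ∈ Ioo β 1, 0 < ρ := fun ρ hρ => hβ0.trans hρ.1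
  have hpair := fun ρ (hρ : ρ ∈ Ioo β 1) => exists_maximal_indices_add_eq_zero hxw (hpos ρ hρ)
    (tendsto_gaussTerm_cofinite (hpos ρ hρ) hρ.2 fun c hc => (eventually_lt_atBot 0).mono
      fun n hn => by rwa [gaussTerm, hxΩ n hn, norm_zero, zero_mul])
    (tendsto_gaussTerm_cofinite (hpos ρ hρ) hρ.2 (hβ ρ hρ.1)) hi₀ hj₀
  have hρ₀ : (β + 1) / 2 ∈ Ioo β 1 := ⟨by linarith, by linarith⟩
  obtain ⟨d, d', hdd', hmx, hmw, hD, hD'⟩ := hpair _ hρ₀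
  have hd0 : 0 ≤ d := by
    by_contra! h
    exact hD (hxΩ d h)
  refine ⟨d.toNat, (β + 1) / 2, by linarith, hρ₀.2, by rwa [Int.toNat_of_nonneg hd0],
    fun ρ hρ => ?_⟩
  obtain ⟨e, e', hee', hmx', hmw', -, -⟩ := hpair ρ ⟨hρ₀.1.trans hρ.1, hρ.2⟩
  -- maximal indices do not decrease with the radius, and both pairs add up to `0`
  have hde := le_of_forall_gaussTerm_le (hpos _ hρ₀) hρ.1 hmx hmx' hD
  have hde' := le_of_forall_gaussTerm_le (hpos _ hρ₀) hρ.1 hmw hmw' hD'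
  rw [Int.toNat_of_nonneg hd0, show d = e by omega]
  exact hmx'

end NewtonPolygon

section ToPowerSeries

lemma mul_mem_omegaAnSet (hx : x ∈ S.omegaAnSet) (hy : y ∈ S.omegaAnSet) :
    x * y ∈ S.omegaAnSet := fun n hn => by
  rw [coeff_mul_eq_sum ∅ fun i _ => ?_, Finset.sum_empty]
  rcases lt_or_ge i 0 with hi | hi
  · rw [hx i hi, zero_mul]
  · rw [hy (n - i) (by omega), mul_zero]

lemma one_mem_omegaAnSet : (1 : S.Γac) ∈ S.omegaAnSet := fun n hn => by
  simp [S.coeff_one, hn.ne]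

variable (S) in
noncomputable def toPowerSeries (x : S.Γac) : S.F⟦X⟧ := PowerSeries.mk fun n => S.coeff x n

@[simp]
lemma coeff_toPowerSeries (n : ℕ) : PowerSeries.coeff n (S.toPowerSeries x) = S.coeff x n :=
  coeff_mk n _

lemma toPowerSeries_injOn : InjOn S.toPowerSeries S.omegaAnSet := by
  intro x hx y hy h
  refine S.coeff_injective (funext fun n => ?_)
  rcases lt_or_ge n 0 with hn | hn
  · rw [hx n hn, hy n hn]
  · lift n to ℕ using hn
    simpa using congr_arg (PowerSeries.coeff n) h

lemma toPowerSeries_one : S.toPowerSeries 1 = 1 := by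
  ext n
  simp [S.coeff_one, PowerSeries.coeff_one]

lemma toPowerSeries_mul (hx : x ∈ S.omegaAnSet) (hy : y ∈ S.omegaAnSet) :
    S.toPowerSeries (x * y) = S.toPowerSeries x * S.toPowerSeries y := by
  ext n
  rw [coeff_toPowerSeries, PowerSeries.coeff_mul, Finset.Nat.sum_antidiagonal_eq_sum_range_succ
    fun i j => PowerSeries.coeff i (S.toPowerSeries x) * PowerSeries.coeff j (S.toPowerSeries y),
    coeff_mul_eq_sum ((Finset.range (n + 1)).image Nat.cast) fun i hi => ?_,
    Finset.sum_image fun _ _ _ _ h => Nat.cast_injective h]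
  · refine Finset.sum_congr rfl fun k hk => ?_
    simp [Nat.cast_sub (Finset.mem_range_succ_iff.1 hk)]
  · rcases lt_or_ge i 0 with h | h
    · rw [hx i h, zero_mul]
    · lift i to ℕ using h
      have : n < i := by simpa using hi
      rw [hy _ (by omega), mul_zero]

lemma finite_setOf_coeff_ne_zero {D : ℕ} (hy : y ∈ S.omegaAnSet)
    (h : ∀ n, D < n → PowerSeries.coeff n (S.toPowerSeries y) = 0) :
    {i : ℤ | S.coeff y i ≠ 0}.Finite := by
  refine (Set.finite_Icc 0 (D : ℤ)).subset fun i hi => ?_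
  by_contra hi'
  refine hi ?_
  rcases lt_or_ge i 0 with h' | h'
  · exact hy i h'
  lift i to ℕ using h'
  rw [← coeff_toPowerSeries, h i (by simp at hi'; omega)]

lemma exists_toPowerSeries_eq {φ : S.F⟦X⟧} {r : ℝ} (hr : r < 1)
    (hφ : ∀ ρ ∈ Ioo r 1, ∃ A, GaussNormLE ρ φ A) :
    ∃ y ∈ S.omegaAnSet, S.toPowerSeries y = φ := by
  set f : ℤ → S.F := fun n => if 0 ≤ n then PowerSeries.coeff n.toNat φ else 0
  have hgrowth : ∀ ε > 0, ∃ N : ℤ, 0 ≤ N ∧ ∀ n, N ≤ n → S.abv (f n) ≤ (1 + ε) ^ n := by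
    intro ε hε
    obtain ⟨ρ, hρ, hρ1⟩ :=
      exists_between (max_lt hr (inv_lt_one_of_one_lt₀ (lt_add_of_pos_right 1 hε)))
    have hρε := (le_max_right _ _).trans_lt hρ
    have hρ0 : 0 < ρ := (inv_pos.2 (by positivity)).trans hρε
    have hgrow : 1 < (1 + ε) * ρ := by
      simpa [mul_comm] using (inv_lt_iff_one_lt_mul₀' (by positivity : (0 : ℝ) < 1 + ε)).1 hρε
    obtain ⟨A, hA⟩ := hφ ρ ⟨(le_max_left _ _).trans_lt hρ, hρ1⟩
    obtain ⟨N, hN⟩ := pow_unbounded_of_one_lt A hgrow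
    refine ⟨N, by positivity, fun n hn => ?_⟩
    lift n to ℕ using (by omega)
    simp only [f, Nat.cast_nonneg, if_true, Int.toNat_natCast, zpow_natCast, ← norm_eq_abv]
    refine le_of_mul_le_mul_right ?_ (pow_pos hρ0 n)
    calc ‖PowerSeries.coeff n φ‖ * ρ ^ n ≤ A := hA n
      _ ≤ ((1 + ε) * ρ) ^ N := hN.le
      _ ≤ ((1 + ε) * ρ) ^ n := pow_le_pow_right₀ hgrow.le (by exact_mod_cast hn)
      _ = (1 + ε) ^ n * ρ ^ n := mul_pow _ _ _
  have hdecay : ∃ c d : ℝ, 0 < c ∧ 0 < d ∧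
      ∀ n : ℤ, n < 0 → S.abv (f n) ≤ (p : ℝ) ^ (c * n + d) :=
    ⟨1, 1, one_pos, one_pos, fun n hn => by
      simp only [f, hn.not_ge, if_false, ← norm_eq_abv, norm_zero]
      positivity⟩
  obtain ⟨y, hy⟩ := S.coeff_surjective f hgrowth hdecay
  refine ⟨y, fun n hn => by simp [hy, f, hn.not_ge], ?_⟩
  ext n
  simp [hy, f]

end ToPowerSeries

end AnSetting

open AnSetting

/-- Suppose `x ∈ Ω_an` becomes invertible in `Γ_{an,con}`.  Then there is
a polynomial `y` with coefficients in `O[1/p]` such that `x = y · v` for some unit `v` of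
`Ω_an`. -/
theorem omegaAn_unit_factorization {p : ℕ} [Fact p.Prime] (S : AnSetting p)
    (x : S.Γac) (hxΩ : x ∈ S.omegaAnSet) (hx : IsUnit x) :
    ∃ y v : S.Γac,
      -- `y` is a polynomial (an element of `F[t] ⊆ Ω_an`)
      ({i : ℤ | S.coeff y i ≠ 0}.Finite ∧ y ∈ S.omegaAnSet) ∧
      -- `v` is a unit of `Ω_an`
      (v ∈ S.omegaAnSet ∧ ∃ w ∈ S.omegaAnSet, v * w = 1) ∧
      x = y * v := by
  obtain ⟨w, hxw⟩ := hx.exists_right_inv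
  obtain ⟨D, r, hr0, hr1, hD, hdom⟩ := exists_dominant_index hxΩ hxw
  have hdomφ : ∀ ρ ∈ Ioo r 1, GaussNormLE ρ (S.toPowerSeries x)
      (‖coeff D (S.toPowerSeries x)‖ * ρ ^ D) := fun ρ hρ n => by
    simpa [gaussTerm] using hdom ρ hρ n
  obtain ⟨q, hq0, hq, hpoly⟩ :=
    exists_mul_eq_polynomial_of_dominant hr0 hr1 hdomφ (by simpa using hD)
  obtain ⟨y, hyΩ, hy⟩ := exists_toPowerSeries_eq (S := S) hr1 fun ρ hρ =>
    ⟨_, (hdomφ ρ hρ).mul (hr0.trans_lt hρ.1) (hq ρ hρ).1⟩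
  obtain ⟨v, hvΩ, hv⟩ := exists_toPowerSeries_eq (S := S) hr1 fun ρ hρ => ⟨1, (hq ρ hρ).2⟩
  obtain ⟨v', hv'Ω, hv'⟩ := exists_toPowerSeries_eq (S := S) hr1 fun ρ hρ => ⟨1, (hq ρ hρ).1⟩
  refine ⟨y, v, ⟨finite_setOf_coeff_ne_zero hyΩ (hy ▸ hpoly), hyΩ⟩,
    ⟨hvΩ, v', hv'Ω, toPowerSeries_injOn (mul_mem_omegaAnSet hvΩ hv'Ω) one_mem_omegaAnSet ?_⟩,
    toPowerSeries_injOn hxΩ (mul_mem_omegaAnSet hyΩ hvΩ) ?_⟩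
  · rw [toPowerSeries_mul hvΩ hv'Ω, hv, hv', toPowerSeries_one, PowerSeries.inv_mul_cancel _ hq0]
  · rw [toPowerSeries_mul hyΩ hvΩ, hy, hv, mul_assoc, PowerSeries.mul_inv_cancel _ hq0, mul_one]
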